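/- arXiv:1010.6160 — 3 statements merged into one kernel-verified Lean document; each statement's English description precedes it below -/
import Mathlib

section
/- Let Ω be a fundamental domain for a full-rank lattice Λ in ℝ^d that is star-shaped with respect to a point N ∈ Ω (for every Q ∈ Ω the segment from N to Q lies in Ω). Then for every 0 < γ ≤ 1, the set γ·(Ω − N) is a packing set for Λ. -/
open MeasureTheory Set

noncomputable section

def latVec {d : ℕ} (M : Matrix (Fin d) (Fin d) ℝ) (k : Fin d → ℤ) :
    EuclideanSpace ℝ (Fin d) :=
  WithLp.toLp 2 (M.mulVec (fun i => (k i : ℝ)))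

def trSet {d : ℕ} (v : EuclideanSpace ℝ (Fin d)) (Ω : Set (EuclideanSpace ℝ (Fin d))) :
    Set (EuclideanSpace ℝ (Fin d)) :=
  (· + v) '' Ω

def IsPacking {d : ℕ} (M : Matrix (Fin d) (Fin d) ℝ)
    (Ω : Set (EuclideanSpace ℝ (Fin d))) : Prop :=
  ∀ k l : Fin d → ℤ, k ≠ l →
    volume (trSet (latVec M k) Ω ∩ trSet (latVec M l) Ω) = 0

def IsFundamentalDomain' {d : ℕ} (M : Matrix (Fin d) (Fin d) ℝ)
    (Ω : Set (EuclideanSpace ℝ (Fin d))) : Prop :=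
  IsPacking M Ω ∧
    volume ((univ : Set (EuclideanSpace ℝ (Fin d))) \ ⋃ k : Fin d → ℤ, trSet (latVec M k) Ω) = 0

/-- `Ω` is star-shaped with respect to the point `N ∈ Ω`. -/
def StarShapedAt {d : ℕ} (Ω : Set (EuclideanSpace ℝ (Fin d)))
    (N : EuclideanSpace ℝ (Fin d)) : Prop :=
  N ∈ Ω ∧ ∀ Q ∈ Ω, ∀ t ∈ Set.Icc (0 : ℝ) 1, (1 - t) • N + t • Q ∈ Ω

/-! Star-shapedness gives `γ • (Ω - N) ⊆ Ω - N`, and the packing property passes from `Ω` to its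
translates and from there to their subsets. -/

namespace IsPacking

variable {d : ℕ} {M : Matrix (Fin d) (Fin d) ℝ} {Ω Ω' : Set (EuclideanSpace ℝ (Fin d))}

theorem mono (h : IsPacking M Ω) (hsub : Ω' ⊆ Ω) : IsPacking M Ω' := fun k l hkl =>
  measure_mono_null (inter_subset_inter (image_mono hsub) (image_mono hsub)) (h k l hkl)

theorem translate (h : IsPacking M Ω) (v : EuclideanSpace ℝ (Fin d)) :
    IsPacking M (trSet v Ω) := by
  intro k l hkl
  have hcomm : ∀ w, trSet w (trSet v Ω) = (· + v) '' trSet w Ω := fun w => by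
    simp only [trSet, image_image, add_right_comm]
  rw [hcomm, hcomm, ← image_inter (add_left_injective v), image_add_right,
    measure_preimage_add_right]
  exact h k l hkl

end IsPacking

theorem StarShapedAt.smul_sub_subset_trSet {d : ℕ} {Ω : Set (EuclideanSpace ℝ (Fin d))}
    {N : EuclideanSpace ℝ (Fin d)} (hstar : StarShapedAt Ω N) {γ : ℝ} (hγ0 : 0 ≤ γ)
    (hγ1 : γ ≤ 1) : (fun y => γ • y) '' ((fun y => y - N) '' Ω) ⊆ trSet (-N) Ω := by
  rintro _ ⟨_, ⟨z, hz, rfl⟩, rfl⟩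
  exact ⟨(1 - γ) • N + γ • z, hstar.2 z hz γ ⟨hγ0, hγ1⟩, by module⟩

theorem scaled_starshaped_fundamental_domain_is_packing_general {d : ℕ}
    (M : Matrix (Fin d) (Fin d) ℝ)
    (Ω : Set (EuclideanSpace ℝ (Fin d)))
    (N : EuclideanSpace ℝ (Fin d))
    (hfund : IsFundamentalDomain' M Ω)
    (hstar : StarShapedAt Ω N)
    (γ : ℝ) (hγ0 : 0 < γ) (hγ1 : γ ≤ 1) :
    IsPacking M ((fun y => γ • y) '' ((fun y => y - N) '' Ω)) :=
  (hfund.1.translate (-N)).mono (hstar.smul_sub_subset_trSet hγ0.le hγ1)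

theorem scaled_starshaped_fundamental_domain_is_packing {d : ℕ}
    (M : Matrix (Fin d) (Fin d) ℝ) (hM : M.det ≠ 0)
    (Ω : Set (EuclideanSpace ℝ (Fin d)))
    (N : EuclideanSpace ℝ (Fin d))
    (hfund : IsFundamentalDomain' M Ω)
    (hstar : StarShapedAt Ω N)
    (γ : ℝ) (hγ0 : 0 < γ) (hγ1 : γ ≤ 1) :
    IsPacking M ((fun y => γ • y) '' ((fun y => y - N) '' Ω)) :=
  scaled_starshaped_fundamental_domain_is_packing_general M Ω N hfund hstar γ hγ0 hγ1
end
end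

section
/- Let A and B be invertible d×d real matrices, and let Ω ⊆ ℝ^d be a fundamental domain for the lattice A·ℤ^d which is also a packing set for the lattice B^{−T}·ℤ^d. Then for all (x,ω), (x',ω') in B^{−T}ℤ^d × A^{−T}ℤ^d with (x,ω) ≠ (x',ω'), the functions M_ω T_x χ_Ω and M_{ω'} T_{x'} χ_Ω are orthogonal in L²(ℝ^d), and each has L²-norm |det A|^{1/2}. In particular ((m(Ω))^{−1/2} χ_Ω, B^{−T}ℤ^d × A^{−T}ℤ^d) is an orthonormal system in L²(ℝ^d). -/
open MeasureTheory Set Matrix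
open scoped RealInnerProductSpace ENNReal

noncomputable section

/-- The time-frequency shift `M_ω T_x g`. -/
def tfShift {d : ℕ} (x ω : EuclideanSpace ℝ (Fin d))
    (g : EuclideanSpace ℝ (Fin d) → ℂ) (t : EuclideanSpace ℝ (Fin d)) : ℂ :=
  Complex.exp (2 * Real.pi * Complex.I * (⟪ω, t⟫ : ℝ)) * g (t - x)

/-- The indicator of `Ω` as a complex-valued function. -/
def chi {d : ℕ} (Ω : Set (EuclideanSpace ℝ (Fin d))) :
    EuclideanSpace ℝ (Fin d) → ℂ :=
  Ω.indicator fun _ => (1 : ℂ)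


/-!
If the translation parts differ, the two functions live on translates of `Ω` by distinct points
of `B^{-T}ℤ^d`, which meet in a null set since `Ω` packs that lattice. If they agree, the product
is the character `t ↦ e^{2πi⟨ω - ω', t⟩}` on a translate of `Ω`, itself a fundamental domain of
`Aℤ^d`. As `ω - ω'` is a nonzero point of the dual lattice `A^{-T}ℤ^d`, this character is
trivial on `Aℤ^d` but not on `ℝ^d`, and the integral of such a character over a fundamental
domain vanishes. The squared norm is the measure of a fundamental domain of `Aℤ^d`, equal to
that of the parallelepiped spanned by the columns of `A`, namely `|det A|`.
-/

open scoped FourierTransform Pointwise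

theorem MeasureTheory.IsAddFundamentalDomain.setIntegral_addChar_eq_zero
    {V : Type*} [AddCommGroup V] [MeasurableSpace V] [MeasurableAdd V]
    {μ : Measure V} [μ.IsAddLeftInvariant] {L : AddSubgroup V} [Countable L] {Ω : Set V}
    (hΩ : IsAddFundamentalDomain L Ω μ) {ψ : AddChar V Circle} (hψL : ∀ v ∈ L, ψ v = 1)
    (hψ : ψ ≠ 1) :
    ∫ t in Ω, (ψ t : ℂ) ∂μ = 0 := by
  obtain ⟨y, hy⟩ := AddChar.ne_one_iff.1 hψ
  have hperiodic : ∀ (g : L) (t : V), (ψ (g +ᵥ t) : ℂ) = ψ t := fun g t => by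
    rw [AddSubgroup.vadd_def, vadd_eq_add, AddChar.map_add_eq_mul, hψL g g.2, one_mul]
  have hshift : ∫ t in y +ᵥ Ω, (ψ t : ℂ) ∂μ = ψ y * ∫ t in Ω, (ψ t : ℂ) ∂μ := by
    rw [← integral_const_mul, ← image_vadd, (measurePreserving_vadd y μ).setIntegral_image_emb
      (measurableEmbedding_const_vadd y)]
    simp only [vadd_eq_add, AddChar.map_add_eq_mul, Circle.coe_mul]
  -- `y +ᵥ Ω` is again a fundamental domain, so translating by `y` multiplies the integral by
  -- `ψ y ≠ 1` without changing it.
  have hinv := (hΩ.vadd_of_comm y).setIntegral_eq hΩ (f := fun t => (ψ t : ℂ)) hperiodic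
  rw [hshift] at hinv
  have hy' : (ψ y : ℂ) ≠ 1 := by rwa [Ne, Circle.coe_eq_one]
  by_contra hne
  exact hy' ((mul_eq_right₀ hne).1 hinv)

section InnerChar

variable {V : Type*} [NormedAddCommGroup V] [InnerProductSpace ℝ V]

def innerChar (ν : V) : AddChar V Circle :=
  𝐞.compAddMonoidHom (innerₛₗ ℝ ν).toAddMonoidHom

@[simp]
theorem innerChar_apply (ν t : V) : innerChar ν t = 𝐞 ⟪ν, t⟫ := rfl

theorem innerChar_ne_one {ν : V} (hν : ν ≠ 0) : innerChar ν ≠ 1 := by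
  obtain ⟨a, ha⟩ := AddChar.ne_one_iff.1 Real.fourierChar_ne_one
  refine AddChar.ne_one_iff.2 ⟨(a / ‖ν‖ ^ 2) • ν, ?_⟩
  have hν' : ‖ν‖ ^ 2 ≠ 0 := by positivity
  rwa [innerChar_apply, inner_smul_right, real_inner_self_eq_norm_sq, div_mul_cancel₀ a hν']

theorem innerChar_apply_eq_one {ν v : V} {n : ℤ} (h : ⟪ν, v⟫ = n) : innerChar ν v = 1 := by
  rw [innerChar_apply, h, Real.fourierChar_apply', Circle.exp_two_pi_mul_int]

theorem innerChar_sub_apply (ω ω' t : V) :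
    (innerChar (ω - ω') t : ℂ) = innerChar ω t * (starRingEnd ℂ) (innerChar ω' t) := by
  rw [innerChar_apply, inner_sub_left, AddChar.map_sub_eq_div, div_eq_mul_inv, Circle.coe_mul,
    Circle.coe_inv_eq_conj, innerChar_apply, innerChar_apply]

end InnerChar

section Lattice

variable {d : ℕ}

local notation "E" => EuclideanSpace ℝ (Fin d)

def latVecHom (M : Matrix (Fin d) (Fin d) ℝ) : (Fin d → ℤ) →+ E where
  toFun := latVec M
  map_zero' := by simp [latVec, ← Pi.zero_def]
  map_add' k l := by simp [latVec, ← Pi.add_def, Matrix.mulVec_add]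

@[simp]
theorem latVecHom_apply (M : Matrix (Fin d) (Fin d) ℝ) (k : Fin d → ℤ) :
    latVecHom M k = latVec M k := rfl

theorem latVec_sub (M : Matrix (Fin d) (Fin d) ℝ) (k l : Fin d → ℤ) :
    latVec M (k - l) = latVec M k - latVec M l :=
  map_sub (latVecHom M) k l

theorem latVecHom_injective {M : Matrix (Fin d) (Fin d) ℝ} (hM : M.det ≠ 0) :
    Function.Injective (latVecHom M) := fun k l h => by
  have := Matrix.mulVec_injective_of_isUnit ((M.isUnit_iff_isUnit_det).2 (isUnit_iff_ne_zero.2 hM))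
    (WithLp.toLp_injective 2 h)
  funext i
  exact_mod_cast congrFun this i

def lattice (M : Matrix (Fin d) (Fin d) ℝ) : AddSubgroup E := (latVecHom M).range

theorem mem_lattice {M : Matrix (Fin d) (Fin d) ℝ} {v : E} :
    v ∈ lattice M ↔ ∃ k, latVec M k = v := AddMonoidHom.mem_range

instance (M : Matrix (Fin d) (Fin d) ℝ) : Countable (lattice M) :=
  (Set.countable_range (latVec M)).to_subtype

theorem trSet_eq_vadd (v : E) (Ω : Set E) : trSet v Ω = v +ᵥ Ω := by
  simp [trSet, ← image_vadd, add_comm]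

theorem IsFundamentalDomain'.isAddFundamentalDomain {M : Matrix (Fin d) (Fin d) ℝ} {Ω : Set E}
    (hΩ : NullMeasurableSet Ω) (h : IsFundamentalDomain' M Ω) :
    IsAddFundamentalDomain (lattice M) Ω where
  nullMeasurableSet := hΩ
  ae_covers := by
    refine measure_mono_null (fun t ht => ?_) h.2
    refine ⟨mem_univ t, fun hcov => ?_⟩
    obtain ⟨k, hk⟩ := mem_iUnion.1 hcov
    rw [trSet_eq_vadd, mem_vadd_set_iff_neg_vadd_mem] at hk
    exact ht ⟨⟨-latVec M k, neg_mem ⟨k, rfl⟩⟩, hk⟩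
  aedisjoint := by
    rintro ⟨_, k, rfl⟩ ⟨_, l, rfl⟩ hkl
    have := h.1 k l (fun h => hkl (by subst h; rfl))
    simpa [AEDisjoint, trSet_eq_vadd, AddSubgroup.vadd_def] using this

theorem det_toEuclideanLin (A : Matrix (Fin d) (Fin d) ℝ) :
    LinearMap.det (Matrix.toEuclideanLin A) = A.det := by
  rw [Matrix.toEuclideanLin_eq_toLin_orthonormal, LinearMap.det_toLin]

def columnBasis (A : Matrix (Fin d) (Fin d) ℝ) (hA : A.det ≠ 0) : Module.Basis (Fin d) ℝ E :=
  (EuclideanSpace.basisFun (Fin d) ℝ).toBasis.map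
    ((Matrix.toEuclideanLin A).equivOfDetNeZero (by rwa [det_toEuclideanLin]))

theorem latVec_eq_sum_columnBasis (A : Matrix (Fin d) (Fin d) ℝ) (hA : A.det ≠ 0)
    (k : Fin d → ℤ) : latVec A k = ∑ i, k i • columnBasis A hA i := by
  ext j
  simp [columnBasis, latVec, Matrix.mulVec, dotProduct, mul_comm]

theorem lattice_eq_span_columnBasis (A : Matrix (Fin d) (Fin d) ℝ) (hA : A.det ≠ 0) :
    lattice A = (Submodule.span ℤ (range (columnBasis A hA))).toAddSubgroup := by
  ext v
  simp [mem_lattice, Submodule.mem_span_range_iff_exists_fun, latVec_eq_sum_columnBasis A hA]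

theorem volume_fundamentalDomain_columnBasis (A : Matrix (Fin d) (Fin d) ℝ) (hA : A.det ≠ 0) :
    volume (ZSpan.fundamentalDomain (columnBasis A hA)) = ENNReal.ofReal |A.det| := by
  set b₀ := (EuclideanSpace.basisFun (Fin d) ℝ).toBasis
  have hb₀ : volume (ZSpan.fundamentalDomain b₀) = 1 := by
    rw [measure_congr (ZSpan.fundamentalDomain_ae_parallelepiped b₀ volume)]
    exact (EuclideanSpace.basisFun (Fin d) ℝ).volume_parallelepiped
  have hφ : ⇑((Matrix.toEuclideanLin A).equivOfDetNeZero (by rwa [det_toEuclideanLin])) =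
      Matrix.toEuclideanLin A := by
    ext x; simp
  rw [ZSpan.measure_fundamentalDomain _ _ b₀, hb₀, mul_one, columnBasis, Module.Basis.coe_map, hφ,
    Module.Basis.det_comp, Module.Basis.det_self, mul_one, det_toEuclideanLin]

theorem MeasureTheory.IsAddFundamentalDomain.volume_eq_abs_det {A : Matrix (Fin d) (Fin d) ℝ}
    (hA : A.det ≠ 0) {Ω : Set E} (hΩ : IsAddFundamentalDomain (lattice A) Ω) :
    volume Ω = ENNReal.ofReal |A.det| := by
  rw [← volume_fundamentalDomain_columnBasis A hA]
  refine hΩ.measure_eq ?_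
  rw [lattice_eq_span_columnBasis A hA]
  exact ZSpan.isAddFundamentalDomain' _ _

theorem inner_latVec_transpose_inv (A : Matrix (Fin d) (Fin d) ℝ) (hA : A.det ≠ 0)
    (l k : Fin d → ℤ) : ⟪latVec A⁻¹ᵀ l, latVec A k⟫ = ((l ⬝ᵥ k : ℤ) : ℝ) := by
  rw [latVec, latVec, EuclideanSpace.inner_toLp_toLp, star_trivial, dotProduct_comm,
    Matrix.mulVec_transpose, Matrix.dotProduct_mulVec, Matrix.vecMul_vecMul,
    Matrix.nonsing_inv_mul A (isUnit_iff_ne_zero.2 hA), Matrix.vecMul_one]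
  simp [dotProduct]

theorem innerChar_latVec_transpose_inv_eq_one {A : Matrix (Fin d) (Fin d) ℝ} (hA : A.det ≠ 0)
    (l : Fin d → ℤ) : ∀ v ∈ lattice A, innerChar (latVec A⁻¹ᵀ l) v = 1 := by
  rintro _ ⟨k, rfl⟩
  exact innerChar_apply_eq_one (inner_latVec_transpose_inv A hA l k)

end Lattice

section TimeFrequency

variable {d : ℕ}

local notation "E" => EuclideanSpace ℝ (Fin d)

theorem tfShift_eq_innerChar_mul (x ω : E) (g : E → ℂ) (t : E) :
    tfShift x ω g t = innerChar ω t * g (t - x) := by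
  rw [tfShift, innerChar_apply, Real.fourierChar_apply]
  congr 2
  push_cast
  ring

theorem norm_tfShift (x ω : E) (g : E → ℂ) (t : E) : ‖tfShift x ω g t‖ = ‖g (t - x)‖ := by
  rw [tfShift_eq_innerChar_mul, norm_mul, Circle.norm_coe, one_mul]

theorem chi_sub_eq_indicator (Ω : Set E) (x t : E) :
    chi Ω (t - x) = (x +ᵥ Ω).indicator 1 t := by
  classical
  rw [chi, indicator_apply, indicator_apply, mem_vadd_set_iff_neg_vadd_mem, vadd_eq_add,
    neg_add_eq_sub]
  rfl

theorem tfShift_chi_mul_conj (Ω : Set E) (x ω x' ω' t : E) :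
    tfShift x ω (chi Ω) t * (starRingEnd ℂ) (tfShift x' ω' (chi Ω) t) =
      ((x +ᵥ Ω) ∩ (x' +ᵥ Ω)).indicator (fun t => (innerChar (ω - ω') t : ℂ)) t := by
  rw [tfShift_eq_innerChar_mul, tfShift_eq_innerChar_mul, chi_sub_eq_indicator,
    chi_sub_eq_indicator]
  by_cases h : t ∈ x +ᵥ Ω <;> by_cases h' : t ∈ x' +ᵥ Ω <;>
    simp [h, h', innerChar_sub_apply, -innerChar_apply]

theorem integral_tfShift_chi_mul_conj {Ω : Set E} (hΩ : MeasurableSet Ω) (x ω x' ω' : E) :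
    ∫ t, tfShift x ω (chi Ω) t * (starRingEnd ℂ) (tfShift x' ω' (chi Ω) t) =
      ∫ t in (x +ᵥ Ω) ∩ (x' +ᵥ Ω), (innerChar (ω - ω') t : ℂ) := by
  simp_rw [tfShift_chi_mul_conj]
  exact integral_indicator ((hΩ.const_vadd x).inter (hΩ.const_vadd x'))

theorem integral_norm_tfShift_chi_sq {Ω : Set E} (hΩ : MeasurableSet Ω) (x ω : E) :
    ∫ t, ‖tfShift x ω (chi Ω) t‖ ^ 2 = volume.real (x +ᵥ Ω) := by
  have hsq : ∀ t, ‖(x +ᵥ Ω).indicator (1 : E → ℂ) t‖ ^ 2 = (x +ᵥ Ω).indicator 1 t := fun t => by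
    by_cases h : t ∈ x +ᵥ Ω <;> simp [h]
  simp_rw [norm_tfShift, chi_sub_eq_indicator, hsq]
  exact integral_indicator_one (hΩ.const_vadd x)

end TimeFrequency

theorem gabor_chi_orthonormal_system_general {d : ℕ}
    (A B : Matrix (Fin d) (Fin d) ℝ) (hA : A.det ≠ 0)
    (Ω : Set (EuclideanSpace ℝ (Fin d))) (hΩ : MeasurableSet Ω)
    (hfund : IsFundamentalDomain' A Ω)
    (hpack : IsPacking B⁻¹ᵀ Ω) :
    (∀ k l k' l' : Fin d → ℤ, (k, l) ≠ (k', l') →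
      (∫ t : EuclideanSpace ℝ (Fin d),
        tfShift (latVec B⁻¹ᵀ k) (latVec A⁻¹ᵀ l) (chi Ω) t *
          (starRingEnd ℂ) (tfShift (latVec B⁻¹ᵀ k') (latVec A⁻¹ᵀ l') (chi Ω) t)) = 0) ∧
    (∀ k l : Fin d → ℤ,
      (∫ t : EuclideanSpace ℝ (Fin d),
        ‖tfShift (latVec B⁻¹ᵀ k) (latVec A⁻¹ᵀ l) (chi Ω) t‖ ^ 2) = |A.det|) := by
  have hfd : ∀ x : EuclideanSpace ℝ (Fin d), IsAddFundamentalDomain (lattice A) (x +ᵥ Ω) :=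
    (hfund.isAddFundamentalDomain hΩ.nullMeasurableSet).vadd_of_comm
  have hA' : A⁻¹ᵀ.det ≠ 0 := by simpa [Matrix.det_transpose, Matrix.det_nonsing_inv] using hA
  refine ⟨fun k l k' l' hne => ?_, fun k l => ?_⟩
  · rw [integral_tfShift_chi_mul_conj hΩ, ← latVec_sub]
    by_cases hk : k = k'
    · subst hk
      have hl : l - l' ≠ 0 := sub_ne_zero.2 fun h => hne (by rw [h])
      rw [inter_self]
      exact (hfd _).setIntegral_addChar_eq_zero (innerChar_latVec_transpose_inv_eq_one hA _)
        (innerChar_ne_one ((map_ne_zero_iff _ (latVecHom_injective hA')).2 hl))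
    · exact setIntegral_measure_zero _ (by simpa [trSet_eq_vadd] using hpack k k' hk)
  · rw [integral_norm_tfShift_chi_sq hΩ, measureReal_def, (hfd _).volume_eq_abs_det hA,
      ENNReal.toReal_ofReal (abs_nonneg _)]

theorem gabor_chi_orthonormal_system {d : ℕ}
    (A B : Matrix (Fin d) (Fin d) ℝ) (hA : A.det ≠ 0) (hB : B.det ≠ 0)
    (Ω : Set (EuclideanSpace ℝ (Fin d))) (hΩ : MeasurableSet Ω)
    (hfund : IsFundamentalDomain' A Ω)
    (hpack : IsPacking B⁻¹ᵀ Ω) :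
    (∀ k l k' l' : Fin d → ℤ, (k, l) ≠ (k', l') →
      (∫ t : EuclideanSpace ℝ (Fin d),
        tfShift (latVec B⁻¹ᵀ k) (latVec A⁻¹ᵀ l) (chi Ω) t *
          (starRingEnd ℂ) (tfShift (latVec B⁻¹ᵀ k') (latVec A⁻¹ᵀ l') (chi Ω) t)) = 0) ∧
    (∀ k l : Fin d → ℤ,
      (∫ t : EuclideanSpace ℝ (Fin d),
        ‖tfShift (latVec B⁻¹ᵀ k) (latVec A⁻¹ᵀ l) (chi Ω) t‖ ^ 2) = |A.det|) :=
  gabor_chi_orthonormal_system_general A B hA Ω hΩ hfund hpack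
end
end

section
/- Let m, n be coprime positive integers and let Ω = T·[0,1)² where T is the 2×2 matrix with rows (1/n, m) and (0, n). Then Ω is a fundamental domain for the lattice ℤ², i.e., the translates {Ω + k : k ∈ ℤ²} partition ℝ² (they are pairwise disjoint and cover ℝ²). -/
open MeasureTheory Set Matrix

noncomputable section

/-- The half-open parallelogram `T · [0,1)²`. -/
def para (T : Matrix (Fin 2) (Fin 2) ℝ) : Set (EuclideanSpace ℝ (Fin 2)) :=
  (fun v : Fin 2 → ℝ => (WithLp.toLp 2 (T.mulVec v) : EuclideanSpace ℝ (Fin 2))) ''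
    {v | ∀ i, v i ∈ Set.Ico (0 : ℝ) 1}

/-!
Inverting `T` gives `T⁻¹ = !![n, -m; 0, 1/n]`, so `x` lies in the translate by `k` iff
`n (x₀ - k₀) - m (x₁ - k₁) ∈ [0,1)` and `x₁ - k₁ ∈ [0,n)`. The first condition says that the
integer `n k₀ - m k₁` equals `⌊n x₀ - m x₁⌋`. Since `m` is invertible modulo `n`, the solutions of
that equation are parametrized by one residue class of `k₁` modulo `n` (with `k₀` then determined),
and exactly one member of the class lies in the window `(x₁ - n, x₁]`.
-/

lemma latVec_one {d : ℕ} (k : Fin d → ℤ) :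
    latVec 1 k = WithLp.toLp 2 (fun i => (k i : ℝ)) := by
  simp [latVec]

lemma mem_trSet_iff {d : ℕ} {v x : EuclideanSpace ℝ (Fin d)} {Ω : Set (EuclideanSpace ℝ (Fin d))} :
    x ∈ trSet v Ω ↔ x - v ∈ Ω := by
  simp [trSet, sub_eq_add_neg]

lemma mem_para_iff_of_mul_eq_one {T S : Matrix (Fin 2) (Fin 2) ℝ} (hST : S * T = 1)
    {x : EuclideanSpace ℝ (Fin 2)} : x ∈ para T ↔ ∀ i, (S *ᵥ x.ofLp) i ∈ Ico 0 1 := by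
  constructor
  · rintro ⟨v, hv, rfl⟩
    rwa [mulVec_mulVec, hST, one_mulVec]
  · intro hx
    refine ⟨S *ᵥ x.ofLp, hx, ?_⟩
    change WithLp.toLp 2 (T *ᵥ S *ᵥ x.ofLp) = x
    rw [mulVec_mulVec, mul_eq_one_comm.mp hST, one_mulVec]

lemma mem_para_shear_iff {m n : ℝ} (hn : 0 < n) {x : EuclideanSpace ℝ (Fin 2)} :
    x ∈ para !![1 / n, m; 0, n] ↔ n * x 0 - m * x 1 ∈ Ico 0 1 ∧ x 1 ∈ Ico 0 n := by
  have hinv : !![n, -m; 0, 1 / n] * !![1 / n, m; 0, n] = 1 := by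
    ext i j; fin_cases i <;> fin_cases j <;> simp [hn.ne', mul_comm]
  rw [mem_para_iff_of_mul_eq_one hinv, Fin.forall_fin_two]
  simp [mulVec, dotProduct, Fin.sum_univ_two, inv_mul_lt_iff₀ hn, sub_lt_iff_lt_add, hn]

lemma existsUnique_modEq_sub_mem_Ico {n : ℤ} (hn : 0 < n) (r : ℤ) (t : ℝ) :
    ∃! k : ℤ, k ≡ r [ZMOD n] ∧ t - k ∈ Ico 0 (n : ℝ) := by
  have hnR : (0 : ℝ) < n := by exact_mod_cast hn
  obtain ⟨q, hq, hq_uniq⟩ := existsUnique_sub_zsmul_mem_Ico hnR (t - r) 0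
  refine ⟨r + q * n, ⟨?_, ?_⟩, ?_⟩
  · simp [Int.ModEq]
  · simpa [sub_sub, mul_comm] using hq
  · rintro k ⟨hk, hkt⟩
    obtain ⟨q', hq'⟩ := Int.modEq_iff_dvd.mp hk.symm
    have hk' : k = r + q' * n := by linarith
    obtain rfl : q' = q := hq_uniq q' <| by
      push_cast [hk'] at hkt
      simpa [sub_sub, mul_comm] using hkt
    exact hk'

lemma exists_modEq_iff_dvd_add_mul {m n : ℤ} (hmn : IsCoprime m n) (j : ℤ) :
    ∃ r, ∀ k, n ∣ j + m * k ↔ k ≡ r [ZMOD n] := by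
  obtain ⟨u, v, huv⟩ := hmn
  refine ⟨-(u * j), fun k => ?_⟩
  rw [Int.modEq_comm, Int.modEq_iff_dvd, sub_neg_eq_add]
  constructor
  · intro h
    have : k + u * j = u * (j + m * k) + n * (v * k) := by linear_combination (-k) * huv
    rw [this]
    exact dvd_add (dvd_mul_of_dvd_right h u) (dvd_mul_right n _)
  · intro h
    have : j + m * k = m * (k + u * j) + n * (v * j) := by linear_combination (-j) * huv
    rw [this]
    exact dvd_add (dvd_mul_of_dvd_right h m) (dvd_mul_right n _)

lemma existsUnique_sub_mul_eq_and_sub_mem_Ico {m n : ℤ} (hn : 0 < n) (hmn : IsCoprime m n)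
    (j : ℤ) (t : ℝ) : ∃! k : Fin 2 → ℤ, n * k 0 - m * k 1 = j ∧ t - k 1 ∈ Ico 0 (n : ℝ) := by
  obtain ⟨r, hr⟩ := exists_modEq_iff_dvd_add_mul hmn j
  obtain ⟨k₁, ⟨hk₁r, hk₁t⟩, hk₁_uniq⟩ := existsUnique_modEq_sub_mem_Ico hn r t
  obtain ⟨k₀, hk₀⟩ := (hr k₁).mpr hk₁r
  refine ⟨![k₀, k₁], ⟨by simp; linarith, hk₁t⟩, ?_⟩
  rintro k ⟨hkj, hkt⟩
  have h₁ : k 1 = k₁ := hk₁_uniq _ ⟨(hr _).mp ⟨k 0, by linarith⟩, hkt⟩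
  have h₀ : k 0 = k₀ := mul_left_cancel₀ hn.ne' (by rw [h₁] at hkj; linarith)
  ext i; fin_cases i <;> simp [h₀, h₁]

lemma sub_intCast_mem_Ico_iff_floor_eq {a : ℝ} {z : ℤ} : a - z ∈ Ico 0 1 ↔ ⌊a⌋ = z := by
  rw [Int.floor_eq_iff, mem_Ico, sub_nonneg, sub_lt_iff_lt_add']

lemma mem_trSet_latVec_para_shear_iff {m n : ℝ} (hn : 0 < n) (k : Fin 2 → ℤ)
    (x : EuclideanSpace ℝ (Fin 2)) :
    x ∈ trSet (latVec 1 k) (para !![1 / n, m; 0, n]) ↔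
      n * (x 0 - k 0) - m * (x 1 - k 1) ∈ Ico 0 1 ∧ x 1 - k 1 ∈ Ico 0 n := by
  rw [mem_trSet_iff, mem_para_shear_iff hn, latVec_one]
  rfl

lemma forall_ne_disjoint_and_iUnion_eq_univ {ι α : Type*} {s : ι → Set α}
    (h : ∀ x, ∃! i, x ∈ s i) : (∀ i j, i ≠ j → Disjoint (s i) (s j)) ∧ ⋃ i, s i = univ :=
  ⟨fun _ _ hij => disjoint_left.mpr fun x hi hj => hij ((h x).unique hi hj),
    eq_univ_of_forall fun x => mem_iUnion.mpr (h x).exists⟩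

theorem parallelogram_exact_fundamental_domain_general (m n : ℕ)
    (hn : 0 < n) (hmn : Nat.Coprime m n) :
    let T : Matrix (Fin 2) (Fin 2) ℝ := !![1 / (n : ℝ), (m : ℝ); 0, (n : ℝ)]
    (∀ k l : Fin 2 → ℤ, k ≠ l →
      Disjoint (trSet (latVec (1 : Matrix (Fin 2) (Fin 2) ℝ) k) (para T))
        (trSet (latVec (1 : Matrix (Fin 2) (Fin 2) ℝ) l) (para T))) ∧
    (⋃ k : Fin 2 → ℤ, trSet (latVec (1 : Matrix (Fin 2) (Fin 2) ℝ) k) (para T)) =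
      (univ : Set (EuclideanSpace ℝ (Fin 2))) := by
  intro T
  refine forall_ne_disjoint_and_iUnion_eq_univ fun x => ?_
  have hmem : ∀ k : Fin 2 → ℤ, x ∈ trSet (latVec 1 k) (para T) ↔
      (n : ℤ) * k 0 - m * k 1 = ⌊n * x 0 - m * x 1⌋ ∧ x 1 - k 1 ∈ Ico 0 (n : ℝ) := by
    intro k
    rw [mem_trSet_latVec_para_shear_iff (by exact_mod_cast hn), eq_comm,
      ← sub_intCast_mem_Ico_iff_floor_eq]
    push_cast
    ring_nf
  simpa only [hmem, Int.cast_natCast] using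
    existsUnique_sub_mul_eq_and_sub_mem_Ico (Int.natCast_pos.mpr hn)
      (Nat.isCoprime_iff_coprime.mpr hmn) ⌊n * x 0 - m * x 1⌋ (x 1)

theorem parallelogram_exact_fundamental_domain (m n : ℕ)
    (hm : 0 < m) (hn : 0 < n) (hmn : Nat.Coprime m n) :
    let T : Matrix (Fin 2) (Fin 2) ℝ := !![1 / (n : ℝ), (m : ℝ); 0, (n : ℝ)]
    (∀ k l : Fin 2 → ℤ, k ≠ l →
      Disjoint (trSet (latVec (1 : Matrix (Fin 2) (Fin 2) ℝ) k) (para T))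
        (trSet (latVec (1 : Matrix (Fin 2) (Fin 2) ℝ) l) (para T))) ∧
    (⋃ k : Fin 2 → ℤ, trSet (latVec (1 : Matrix (Fin 2) (Fin 2) ℝ) k) (para T)) =
      (univ : Set (EuclideanSpace ℝ (Fin 2))) :=
  parallelogram_exact_fundamental_domain_general m n hn hmn
end
end
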